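/- arXiv:2312.16276 — 5 statements merged into one kernel-verified Lean document; each statement's English description precedes it below -/
import Mathlib

section
/- If (S,τ₁,τ₂) is a pairwise Boolean space, then the pairwise Vietoris space V_P(S) = (K(S), τ₁ᵛ, τ₂ᵛ) is pairwise zero-dimensional, i.e., τ₁ᵛ ∩ {τ₂ᵛ-closed sets} is a basis for τ₁ᵛ and τ₂ᵛ ∩ {τ₁ᵛ-closed sets} is a basis for τ₂ᵛ. -/
open Topology TopologicalSpace Set

section Bitop

variable {X Y : Type*}

/-- A bitopological space `(X, t1, t2)` is pairwise Hausdorff if distinct points can be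
separated by disjoint sets, one `t1`-open and one `t2`-open. -/
def PairwiseHausdorff (t1 t2 : TopologicalSpace X) : Prop :=
  ∀ x y : X, x ≠ y → ∃ U V : Set X,
    IsOpen[t1] U ∧ IsOpen[t2] V ∧ x ∈ U ∧ y ∈ V ∧ Disjoint U V

/-- `beta1 t1 t2` is the family of sets that are `t1`-open and `t2`-closed. -/
def beta1 (t1 t2 : TopologicalSpace X) : Set (Set X) :=
  {U : Set X | IsOpen[t1] U ∧ IsClosed[t2] U}

/-- Pairwise zero-dimensional: `β₁` is a basis for `t1` and `β₂ = beta1 t2 t1` is a basis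
for `t2`. -/
def PairwiseZeroDim (t1 t2 : TopologicalSpace X) : Prop :=
  @IsTopologicalBasis X t1 (beta1 t1 t2) ∧ @IsTopologicalBasis X t2 (beta1 t2 t1)

/-- Pairwise compact: the join topology is compact. -/
def PairwiseCompact (t1 t2 : TopologicalSpace X) : Prop :=
  @CompactSpace X (t1 ⊔ t2)

/-- A pairwise Boolean space. -/
def PairwiseBoolean (t1 t2 : TopologicalSpace X) : Prop :=
  PairwiseHausdorff t1 t2 ∧ PairwiseZeroDim t1 t2 ∧ PairwiseCompact t1 t2

/-- Pairwise continuous maps between bitopological spaces. -/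
def PairwiseContinuous (t1 t2 : TopologicalSpace X) (s1 s2 : TopologicalSpace Y)
    (f : X → Y) : Prop :=
  Continuous[t1, s1] f ∧ Continuous[t2, s2] f

/-- `KSet t1 t2` is the collection of pairwise closed (i.e. closed in the join topology)
subsets of `X`. -/
abbrev KSet (t1 t2 : TopologicalSpace X) : Type _ :=
  {C : Set X // IsClosed[t1 ⊔ t2] C}

/-- `vbox t1 t2 U = {C ∈ K(S) : C ⊆ U}`. -/
def vbox (t1 t2 : TopologicalSpace X) (U : Set X) : Set (KSet t1 t2) :=
  {C : KSet t1 t2 | C.1 ⊆ U}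

/-- `vdia t1 t2 U = {C ∈ K(S) : C ∩ U ≠ ∅}`. -/
def vdia (t1 t2 : TopologicalSpace X) (U : Set X) : Set (KSet t1 t2) :=
  {C : KSet t1 t2 | (C.1 ∩ U).Nonempty}

/-- The topology on `K(S)` generated by the subbasis `{□U, ◇U : U ∈ B}`. -/
def tauV (t1 t2 : TopologicalSpace X) (B : Set (Set X)) : TopologicalSpace (KSet t1 t2) :=
  generateFrom ((vbox t1 t2 '' B) ∪ (vdia t1 t2 '' B))

/-- The first Vietoris topology `τ₁ᵛ`, with subbasis `{□U, ◇U : U ∈ β₁}`. -/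
def tau1V (t1 t2 : TopologicalSpace X) : TopologicalSpace (KSet t1 t2) :=
  tauV t1 t2 (beta1 t1 t2)

/-- The second Vietoris topology `τ₂ᵛ`, with subbasis `{□U, ◇U : U ∈ β₂}`. -/
def tau2V (t1 t2 : TopologicalSpace X) : TopologicalSpace (KSet t1 t2) :=
  tauV t1 t2 (beta1 t2 t1)

end Bitop

/-- The infimum of a subset of a finite lattice with top. -/
noncomputable def infSet {L : Type*} [Fintype L] [SemilatticeInf L] [OrderTop L]
    (s : Set L) : L :=
  letI : DecidablePred (· ∈ s) := fun _ => Classical.propDecidable _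
  (Finset.univ.filter (· ∈ s)).inf id

section Algebra

variable {L : Type*} [HeytingAlgebra L] [Fintype L] [DecidableEq L]

/-- The canonical operation `T_ℓ` on `L` itself: `T_ℓ(x) = 1` if `x = ℓ`, else `0`. -/
def Tcan (l x : L) : L := if x = l then ⊤ else ⊥

variable {A : Type*} [HeytingAlgebra A]

/-- An `L`-`VL`-algebra structure on the Heyting algebra `A` via operations `T : L → A → A`. -/
structure IsLVL (T : L → A → A) : Prop where
  ax_ops : ∀ (l1 l2 : L) (a b : A),
    T l1 a ⊓ T l2 b ≤ T (l1 ⇨ l2) (a ⇨ b) ⊓ T (l1 ⊓ l2) (a ⊓ b) ⊓ T (l1 ⊔ l2) (a ⊔ b)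
  ax_TT : ∀ (l1 l2 : L) (a : A), T l2 a ≤ T (Tcan l1 l2) (T l1 a)
  ax_bot_bot : T ⊥ (⊥ : A) = ⊤
  ax_bot : ∀ l : L, l ≠ ⊥ → T l (⊥ : A) = ⊥
  ax_top_top : T ⊤ (⊤ : A) = ⊤
  ax_top : ∀ l : L, l ≠ ⊤ → T l (⊤ : A) = ⊥
  ax_sup : ∀ a : A, (Finset.univ.sup fun l : L => T l a) = ⊤
  ax_or : ∀ (l1 l2 : L) (a : A), T l1 a ⊔ (T l2 a ⇨ ⊥) = ⊤
  ax_disj : ∀ (l1 l2 : L) (a : A), l1 ≠ l2 → T l1 a ⊓ T l2 a = ⊥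
  ax_T1T : ∀ (l : L) (a : A), T ⊤ (T l a) = T l a
  ax_T0T : ∀ (l : L) (a : A), T ⊥ (T l a) = T l a ⇨ ⊥
  ax_Tmid : ∀ (l l2 : L) (a : A), l2 ≠ ⊥ → l2 ≠ ⊤ → T l2 (T l a) = ⊥
  ax_T1_le : ∀ a : A, T ⊤ a ≤ a
  ax_T1_inf : ∀ a b : A, T ⊤ (a ⊓ b) = T ⊤ a ⊓ T ⊤ b
  ax_sep : ∀ a b : A,
    (Finset.univ.inf fun l : L => (T l a ⇨ T l b) ⊓ (T l b ⇨ T l a)) ≤ (a ⇨ b) ⊓ (b ⇨ a)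

/-- A map `A → L` preserving `∨, ∧, →, 0, 1` and every `T_ℓ`. -/
def IsHom (T : L → A → A) (h : A → L) : Prop :=
  (∀ a b : A, h (a ⊔ b) = h a ⊔ h b) ∧ (∀ a b : A, h (a ⊓ b) = h a ⊓ h b) ∧
  (∀ a b : A, h (a ⇨ b) = h a ⇨ h b) ∧ h ⊥ = ⊥ ∧ h ⊤ = ⊤ ∧
  (∀ (l : L) (a : A), h (T l a) = Tcan l (h a))

/-- `Hom(A, L)`, the set of `L`-`VL`-homomorphisms `A → L`. -/
abbrev HomL (T : L → A → A) : Type _ := {h : A → L // IsHom T h}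

/-- `⟨a⟩ = {h ∈ Hom(A,L) : h(a) = 1}`. -/
def bOpen (T : L → A → A) (a : A) : Set (HomL T) := {h : HomL T | h.1 a = ⊤}

/-- The topology `τ₁` on `Hom(A,L)` with basis `{⟨a⟩ : a ∈ A}`. -/
def tauH1 (T : L → A → A) : TopologicalSpace (HomL T) :=
  generateFrom (Set.range (bOpen T))

/-- The topology `τ₂` on `Hom(A,L)` with basis `{⟨a⟩ᶜ : a ∈ A}`. -/
def tauH2 (T : L → A → A) : TopologicalSpace (HomL T) :=
  generateFrom (Set.range fun a : A => (bOpen T a)ᶜ)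

/-- `U_ℓ(a) = ⋁ {T_{ℓ'}(a) : ℓ ≤ ℓ'}`. -/
noncomputable def Ucan (T : L → A → A) (l : L) (a : A) : A :=
  letI : DecidablePred fun l' : L => l ≤ l' := fun _ => Classical.propDecidable _
  (Finset.univ.filter fun l' : L => l ≤ l').sup fun l' : L => T l' a

/-- An `L`-`ML`-algebra: an `L`-`VL`-algebra with a modal operator. -/
structure IsLML (T : L → A → A) (Box : A → A) : Prop where
  toLVL : IsLVL T
  box_inf : ∀ a b : A, Box (a ⊓ b) = Box a ⊓ Box b
  box_U : ∀ (l : L) (a : A), Box (Ucan T l a) = Ucan T l (Box a)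

/-- The canonical relation `R_□` on maps `A → L`:
`ψ R_□ φ` iff `∀ ℓ a, ℓ ≤ ψ(□a) → ℓ ≤ φ(a)`. -/
def Rbox (Box : A → A) (ψ φ : A → L) : Prop :=
  ∀ (l : L) (a : A), l ≤ ψ (Box a) → l ≤ φ a

end Algebra

section Aux

variable {S : Type*} (t1 t2 : TopologicalSpace S)

lemma compl_vbox (U : Set S) : (vbox t1 t2 U)ᶜ = vdia t1 t2 Uᶜ := by
  ext C
  simp [vbox, vdia, Set.inter_compl_nonempty_iff]

lemma compl_vdia (U : Set S) : (vdia t1 t2 U)ᶜ = vbox t1 t2 Uᶜ := by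
  ext C
  simp [vbox, vdia, Set.not_nonempty_iff_eq_empty, ← Set.disjoint_iff_inter_eq_empty,
    ← Set.subset_compl_iff_disjoint_right]

lemma beta1_compl {U : Set S} (hU : U ∈ beta1 t1 t2) : Uᶜ ∈ beta1 t2 t1 := by
  exact ⟨hU.2.isOpen_compl, @IsClosed.mk S t1 Uᶜ (by rw [compl_compl]; exact hU.1)⟩

/-- Each subbasic generator of `tauV t1 t2 B1` is closed in `tauV t1 t2 B2`,
provided complements of `B1` sets lie in `B2`. -/
lemma gen_closed {B1 B2 : Set (Set S)} (hB : ∀ U ∈ B1, Uᶜ ∈ B2)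
    {s : Set (KSet t1 t2)} (hs : s ∈ (vbox t1 t2 '' B1) ∪ (vdia t1 t2 '' B1)) :
    IsClosed[tauV t1 t2 B2] s := by
  rcases hs with ⟨U, hU, rfl⟩ | ⟨U, hU, rfl⟩
  · exact @IsClosed.mk _ (tauV t1 t2 B2) _ (by
      rw [compl_vbox]
      exact TopologicalSpace.isOpen_generateFrom_of_mem (Or.inr ⟨Uᶜ, hB U hU, rfl⟩))
  · exact @IsClosed.mk _ (tauV t1 t2 B2) _ (by
      rw [compl_vdia]
      exact TopologicalSpace.isOpen_generateFrom_of_mem (Or.inl ⟨Uᶜ, hB U hU, rfl⟩))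

/-- A family of open sets containing a basis is a basis. -/
lemma basis_of_superset {X : Type*} {t : TopologicalSpace X} {B B' : Set (Set X)}
    (hB : @IsTopologicalBasis X t B) (hsub : B ⊆ B')
    (hopen : ∀ s ∈ B', IsOpen[t] s) : @IsTopologicalBasis X t B' := by
  refine @isTopologicalBasis_of_isOpen_of_nhds X t B' hopen ?_
  intro a u ha hu
  obtain ⟨v, hv, hav, hvu⟩ := hB.exists_subset_of_mem_open ha hu
  exact ⟨v, hsub hv, hav, hvu⟩

lemma one_side {B1 B2 : Set (Set S)} (hB : ∀ U ∈ B1, Uᶜ ∈ B2) :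
    @IsTopologicalBasis (KSet t1 t2) (tauV t1 t2 B1)
      (beta1 (tauV t1 t2 B1) (tauV t1 t2 B2)) := by
  set Sub := (vbox t1 t2 '' B1) ∪ (vdia t1 t2 '' B1) with hSub
  have hgen : tauV t1 t2 B1 = generateFrom Sub := rfl
  have hbasis := @TopologicalSpace.isTopologicalBasis_of_subbasis (KSet t1 t2)
    (tauV t1 t2 B1) Sub hgen
  refine basis_of_superset hbasis ?_ ?_
  · rintro s ⟨f, ⟨hfin, hfsub⟩, rfl⟩
    constructor
    · refine @Set.Finite.isOpen_sInter _ (tauV t1 t2 B1) _ hfin ?_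
      intro u hu
      exact TopologicalSpace.isOpen_generateFrom_of_mem (hfsub hu)
    · refine @isClosed_sInter _ (tauV t1 t2 B2) _ ?_
      intro u hu
      exact gen_closed t1 t2 hB (hfsub hu)
  · exact fun s hs => hs.1

end Aux

/-- If `(S, τ₁, τ₂)` is a pairwise Boolean space then the pairwise Vietoris space
`V_P(S)` is pairwise zero-dimensional. -/
theorem statement1 {S : Type*} (t1 t2 : TopologicalSpace S)
    (h : PairwiseBoolean t1 t2) :
    PairwiseZeroDim (tau1V t1 t2) (tau2V t1 t2) := by
  constructor
  · exact one_side t1 t2 (fun U hU => beta1_compl t1 t2 hU)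
  · exact one_side t1 t2 (fun U hU => beta1_compl t2 t1 hU)
end

section
/- If (S,τ₁,τ₂) is a pairwise Boolean space, then the pairwise Vietoris space V_P(S) = (K(S), τ₁ᵛ, τ₂ᵛ) is pairwise Hausdorff: for any two distinct C, C' ∈ K(S) there exist disjoint sets O ∈ τ₁ᵛ and O' ∈ τ₂ᵛ with C ∈ O and C' ∈ O'. -/
open Topology TopologicalSpace Set

section Proof2

variable {S : Type*}

lemma vdia_open (t1 t2 : TopologicalSpace S) {B : Set (Set S)} {U : Set S} (hU : U ∈ B) :
    IsOpen[tauV t1 t2 B] (vdia t1 t2 U) :=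
  TopologicalSpace.GenerateOpen.basic _ (Or.inr ⟨U, hU, rfl⟩)

lemma vbox_open (t1 t2 : TopologicalSpace S) {B : Set (Set S)} {U : Set S} (hU : U ∈ B) :
    IsOpen[tauV t1 t2 B] (vbox t1 t2 U) :=
  TopologicalSpace.GenerateOpen.basic _ (Or.inl ⟨U, hU, rfl⟩)

lemma vdia_vbox_disjoint (t1 t2 : TopologicalSpace S) (U : Set S) :
    Disjoint (vdia t1 t2 U) (vbox t1 t2 Uᶜ) := by
  rw [Set.disjoint_left]
  rintro D ⟨y, hyD, hyU⟩ hsub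
  exact hsub hyD hyU

end Proof2

/-- If `(S, τ₁, τ₂)` is a pairwise Boolean space then the pairwise Vietoris space
`V_P(S)` is pairwise Hausdorff. -/
theorem statement2 {S : Type*} (t1 t2 : TopologicalSpace S)
    (h : PairwiseBoolean t1 t2) :
    PairwiseHausdorff (tau1V t1 t2) (tau2V t1 t2) := by
  obtain ⟨hH, ⟨hB1, hB2⟩, hC⟩ := h
  intro C C' hne
  have hset : C.1 ≠ C'.1 := fun he => hne (Subtype.ext he)
  by_cases hsub : C.1 ⊆ C'.1
  · -- there is x ∈ C' \\ C
    have : ¬ C'.1 ⊆ C.1 := fun h2 => hset (Set.Subset.antisymm hsub h2)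
    obtain ⟨x, hxC', hxC⟩ := Set.not_subset.1 this
    -- Cᶜ is t2-open and contains x
    have hopen : IsOpen[t2] (C.1ᶜ) := (isOpen_sup.1 C.2.isOpen_compl).2
    obtain ⟨V, hV, hxV, hVsub⟩ := @TopologicalSpace.IsTopologicalBasis.exists_subset_of_mem_open S t2 _ hB2 x _ hxC hopen
    have hVc : Vᶜ ∈ beta1 t1 t2 := ⟨(@isOpen_compl_iff S V t1).2 hV.2, (@isClosed_compl_iff S t2 V).2 hV.1⟩
    refine ⟨vbox t1 t2 Vᶜ, vdia t1 t2 V, vbox_open t1 t2 hVc, vdia_open t1 t2 hV,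
      ?_, ⟨x, hxC', hxV⟩, ?_⟩
    · exact Set.subset_compl_comm.1 (fun y hy => hVsub hy)
    · exact (vdia_vbox_disjoint t1 t2 V).symm
  · obtain ⟨x, hxC, hxC'⟩ := Set.not_subset.1 hsub
    have hopen : IsOpen[t1] (C'.1ᶜ) := (isOpen_sup.1 C'.2.isOpen_compl).1
    obtain ⟨U, hU, hxU, hUsub⟩ := @TopologicalSpace.IsTopologicalBasis.exists_subset_of_mem_open S t1 _ hB1 x _ hxC' hopen
    have hUc : Uᶜ ∈ beta1 t2 t1 := ⟨(@isOpen_compl_iff S U t2).2 hU.2, (@isClosed_compl_iff S t1 U).2 hU.1⟩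
    refine ⟨vdia t1 t2 U, vbox t1 t2 Uᶜ, vdia_open t1 t2 hU, vbox_open t1 t2 hUc,
      ⟨x, hxC, hxU⟩, ?_, vdia_vbox_disjoint t1 t2 U⟩
    · exact Set.subset_compl_comm.1 (fun y hy => hUsub hy)
end

section
/- Let A be an L-ML-algebra. For every a ∈ A, ⟨R_□⟩⟨T₁(a) → 0⟩ = ⟨□T₁(a) → 0⟩, i.e., {W ∈ Hom(A,L) : ∃φ, W R_□ φ and φ(T₁(a) → 0) = 1} = {W ∈ Hom(A,L) : W(□T₁(a) → 0) = 1}; consequently [R_□]⟨a⟩ = {W ∈ Hom(A,L) : ∀φ, W R_□ φ implies φ(a) = 1} belongs to β₁ = τ₁ ∩ {τ₂-closed sets}. -/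
open Topology TopologicalSpace Set

/-!
Both claims reduce to one existence statement: if `W(□T₁a) = 0`, some `φ` with `W R_□ φ` has
`φ(a) ≠ 1`. The set `{x | W(□x) = 1}` is a filter containing `T₁ b` whenever `W(□b) = 1`
(because `□T₁ = T₁□`) and missing `↓T₁(a)`; the prime ideal theorem separates them by a prime
ideal `J`, and the axioms of an `L`-`VL`-algebra make `φ(x) = ℓ ⟺ T_ℓ(x) ∉ J` a homomorphism.
Since `□U_ℓ = U_ℓ□`, this `φ` is an `R_□`-successor of `W`. As `W(□T₁a) ∈ {0, 1}`, it follows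
that `[R_□]⟨a⟩ = ⟨□T₁a⟩`, and every basic set `⟨b⟩` is `τ₁`-open and `τ₂`-closed.
-/

open Order

section Tcan

variable {L : Type*} [HeytingAlgebra L] [DecidableEq L]

theorem Tcan_self (x : L) : Tcan x x = ⊤ := if_pos rfl

theorem Tcan_of_ne {l x : L} (h : x ≠ l) : Tcan l x = ⊥ := if_neg h

theorem Tcan_eq_bot_of_ne_top {l x : L} (h : Tcan l x ≠ ⊤) : Tcan l x = ⊥ := by
  unfold Tcan at h ⊢
  split_ifs at h ⊢ <;> simp_all

end Tcan

section Hom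

variable {L : Type*} [HeytingAlgebra L] [DecidableEq L]
  {A : Type*} [HeytingAlgebra A] {T : L → A → A} {h : A → L}

theorem IsHom.map_sup (hh : IsHom T h) (a b : A) : h (a ⊔ b) = h a ⊔ h b := hh.1 a b

theorem IsHom.map_inf (hh : IsHom T h) (a b : A) : h (a ⊓ b) = h a ⊓ h b := hh.2.1 a b

theorem IsHom.map_himp (hh : IsHom T h) (a b : A) : h (a ⇨ b) = h a ⇨ h b := hh.2.2.1 a b

theorem IsHom.map_bot (hh : IsHom T h) : h ⊥ = ⊥ := hh.2.2.2.1

theorem IsHom.map_top (hh : IsHom T h) : h ⊤ = ⊤ := hh.2.2.2.2.1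

theorem IsHom.map_T (hh : IsHom T h) (l : L) (a : A) : h (T l a) = Tcan l (h a) :=
  hh.2.2.2.2.2 l a

theorem IsHom.monotone (hh : IsHom T h) : Monotone h := fun x y hxy => by
  rw [← inf_eq_left.2 hxy, hh.map_inf]
  exact inf_le_right

def IsHom.toSupBotHom (hh : IsHom T h) : SupBotHom A L := ⟨⟨h, hh.map_sup⟩, hh.map_bot⟩

theorem IsHom.map_himp_bot_eq_top_iff (hh : IsHom T h) (a : A) : h (a ⇨ ⊥) = ⊤ ↔ h a = ⊥ := by
  rw [hh.map_himp, hh.map_bot, himp_eq_top_iff, le_bot_iff]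

theorem IsHom.map_Ucan_eq_top_iff [Fintype L] [Nontrivial L] (hh : IsHom T h) (l : L) (a : A) :
    h (Ucan T l a) = ⊤ ↔ l ≤ h a := by
  classical
  have hmap : h (Ucan T l a) = _ := map_finset_sup hh.toSupBotHom _ _
  simp only [hmap, Function.comp_def, IsHom.toSupBotHom, SupBotHom.coe_mk, SupHom.coe_mk,
    hh.map_T]
  constructor
  · intro htop
    by_contra hla
    refine top_ne_bot (htop.symm.trans (Finset.sup_eq_bot_iff _ _ |>.2 fun l' hl' => ?_))
    exact Tcan_of_ne fun he => hla (he ▸ (Finset.mem_filter.1 hl').2)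
  · intro hla
    exact top_le_iff.1 <| (Tcan_self (h a)).ge.trans <|
      Finset.le_sup (f := fun l' => Tcan l' (h a)) (Finset.mem_filter.2 ⟨Finset.mem_univ _, hla⟩)

end Hom

theorem isPFilter_setOf_eq_top {α β : Type*} [SemilatticeInf α] [OrderTop α]
    [SemilatticeInf β] [OrderTop β] (f : α → β) (map_inf : ∀ x y, f (x ⊓ y) = f x ⊓ f y)
    (map_top : f ⊤ = ⊤) : IsPFilter {x | f x = ⊤} := by
  refine IsPFilter.of_def ⟨⊤, map_top⟩ (fun x hx y hy => ⟨x ⊓ y, ?_, inf_le_left, inf_le_right⟩)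
    fun {x y} hxy hx => ?_
  · simp_all
  · have : f x ≤ f y := by simpa [inf_eq_left.2 hxy] using (map_inf x y).le.trans inf_le_right
    exact top_le_iff.1 (hx.ge.trans this)

section Prime

variable {L : Type*} [HeytingAlgebra L] [Fintype L] [DecidableEq L]
  {A : Type*} [HeytingAlgebra A] {T : L → A → A}

theorem IsLVL.existsUnique_T_notMem (hV : IsLVL T) {J : Ideal A} (hJ : J.IsPrime) (x : A) :
    ∃! l : L, T l x ∉ J := by
  obtain ⟨l, hl⟩ : ∃ l, T l x ∉ J := by
    by_contra! h
    exact hJ.top_notMem (hV.ax_sup x ▸ (J.finsetSup_mem_iff.2 fun l _ => h l))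
  refine ⟨l, hl, fun l' hl' => ?_⟩
  by_contra hne
  exact (hJ.mem_or_mem (hV.ax_disj l' l x hne ▸ J.bot_mem)).elim hl' hl

theorem IsLVL.exists_isHom_of_isPrime (hV : IsLVL T) {J : Ideal A} (hJ : J.IsPrime) :
    ∃ φ : A → L, IsHom T φ ∧ ∀ x l, φ x = l ↔ T l x ∉ J := by
  choose φ hφ using hV.existsUnique_T_notMem hJ
  have hspec : ∀ x l, φ x = l ↔ T l x ∉ J :=
    fun x l => ⟨fun h => h ▸ (hφ x).1, fun h => ((hφ x).2 l h).symm⟩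
  have of_le : ∀ {x l y}, T (φ y) y ≤ T l x → φ x = l :=
    fun hle => (hspec _ _).2 fun hmem => (hφ _).1 (J.lower hle hmem)
  have of_le₂ : ∀ {x l a b}, T (φ a) a ⊓ T (φ b) b ≤ T l x → φ x = l := fun hle =>
    (hspec _ _).2 fun hmem => (hJ.mem_or_mem (J.lower hle hmem)).elim (hφ _).1 (hφ _).1
  have ops := hV.ax_ops
  refine ⟨φ, ⟨fun a b => of_le₂ ((ops _ _ a b).trans inf_le_right),
    fun a b => of_le₂ ((ops _ _ a b).trans (inf_le_left.trans inf_le_right)),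
    fun a b => of_le₂ ((ops _ _ a b).trans (inf_le_left.trans inf_le_left)),
    of_le (y := ⊥) (le_top.trans_eq hV.ax_bot_bot.symm),
    of_le (y := ⊥) (le_top.trans_eq hV.ax_top_top.symm),
    fun l a => of_le (hV.ax_TT l _ a)⟩, hspec⟩

end Prime

section Modal

variable {L : Type*} [HeytingAlgebra L] [Fintype L] [DecidableEq L]
  {A : Type*} [HeytingAlgebra A] {T : L → A → A} {Box : A → A}

theorem IsLVL.Ucan_bot (hV : IsLVL T) (a : A) : Ucan T ⊥ a = ⊤ := by
  classical
  unfold Ucan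
  rw [Finset.filter_true_of_mem fun _ _ => bot_le]
  exact hV.ax_sup a

theorem Ucan_top (a : A) : Ucan T ⊤ a = T ⊤ a := by
  classical
  unfold Ucan
  have : (Finset.univ.filter fun l' : L => ⊤ ≤ l') = {⊤} := by ext; simp [top_le_iff]
  rw [this, Finset.sup_singleton]

theorem IsLML.box_top (hA : IsLML T Box) : Box ⊤ = ⊤ := by
  simpa only [hA.toLVL.Ucan_bot] using hA.box_U ⊥ ⊤

theorem IsLML.box_T_top (hA : IsLML T Box) (a : A) : Box (T ⊤ a) = T ⊤ (Box a) := by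
  simpa only [Ucan_top] using hA.box_U ⊤ a

theorem IsLML.box_monotone (hA : IsLML T Box) : Monotone Box := fun x y hxy => by
  rw [← inf_eq_left.2 hxy, hA.box_inf]
  exact inf_le_right

theorem IsLML.exists_rbox_ne_top [Nontrivial L] (hA : IsLML T Box) (W : HomL T) {a : A}
    (hW : W.1 (Box (T ⊤ a)) = ⊥) : ∃ φ : HomL T, Rbox Box W.1 φ.1 ∧ φ.1 a ≠ ⊤ := by
  let F := (isPFilter_setOf_eq_top (W.1 ∘ Box)
    (fun x y => by simp only [Function.comp_apply, hA.box_inf, W.2.map_inf])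
    (by simp only [Function.comp_apply, hA.box_top, W.2.map_top])).toPFilter
  have T_top_mem : ∀ b, W.1 (Box b) = ⊤ → T ⊤ b ∈ F := fun b hb => by
    change W.1 (Box (T ⊤ b)) = ⊤
    rw [hA.box_T_top, W.2.map_T, hb, Tcan_self]
  have hdisj : Disjoint (F : Set A) (Ideal.principal (T ⊤ a)) :=
    Set.disjoint_left.2 fun x (hx : W.1 (Box x) = ⊤) (hxa : x ≤ T ⊤ a) => top_ne_bot <|
      le_bot_iff.1 (hx ▸ hW ▸ W.2.monotone (hA.box_monotone hxa))
  obtain ⟨J, hJ, haJ, hFJ⟩ := DistribLattice.prime_ideal_of_disjoint_filter_ideal hdisj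
  obtain ⟨φ, hφ, hφJ⟩ := hA.toLVL.exists_isHom_of_isPrime hJ
  refine ⟨⟨φ, hφ⟩, fun l c hlc => ?_, fun h => (hφJ a ⊤).1 h (haJ Ideal.mem_principal_self)⟩
  have hWU : W.1 (Box (Ucan T l c)) = ⊤ := by
    rw [hA.box_U]
    exact (W.2.map_Ucan_eq_top_iff l _).2 hlc
  exact (hφ.map_Ucan_eq_top_iff l c).1 <|
    (hφJ _ _).2 (Set.disjoint_left.1 hFJ (T_top_mem _ hWU))

theorem IsLML.rbox_diamond_eq (hA : IsLML T Box) (a : A) :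
    {W : HomL T | ∃ φ : HomL T, Rbox Box W.1 φ.1 ∧ φ.1 (T ⊤ a ⇨ ⊥) = ⊤}
      = {W : HomL T | W.1 (Box (T ⊤ a) ⇨ ⊥) = ⊤} := by
  ext W
  simp only [Set.mem_ofPred_eq, W.2.map_himp_bot_eq_top_iff]
  constructor
  · rintro ⟨φ, hR, hφ⟩
    exact le_bot_iff.1 ((hR _ _ le_rfl).trans_eq ((φ.2.map_himp_bot_eq_top_iff _).1 hφ))
  · intro hW
    rcases subsingleton_or_nontrivial L with hL | hL
    · exact ⟨W, fun _ _ _ => (Subsingleton.elim _ _).le, Subsingleton.elim _ _⟩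
    obtain ⟨φ, hR, hφa⟩ := hA.exists_rbox_ne_top W hW
    refine ⟨φ, hR, (φ.2.map_himp_bot_eq_top_iff _).2 ?_⟩
    rw [φ.2.map_T, Tcan_of_ne hφa]

theorem IsLML.rbox_box_eq_bOpen (hA : IsLML T Box) (a : A) :
    {W : HomL T | ∀ φ : HomL T, Rbox Box W.1 φ.1 → φ.1 a = ⊤} = bOpen T (Box (T ⊤ a)) := by
  ext W
  simp only [Set.mem_ofPred_eq, bOpen]
  constructor
  · intro h
    by_contra hW
    rcases subsingleton_or_nontrivial L with hL | hL
    · exact hW (Subsingleton.elim _ _)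
    have hW' : W.1 (Box (T ⊤ a)) = ⊥ := by
      rw [hA.box_T_top, W.2.map_T] at hW ⊢
      exact Tcan_eq_bot_of_ne_top hW
    obtain ⟨φ, hR, hφa⟩ := hA.exists_rbox_ne_top W hW'
    exact hφa (h φ hR)
  · intro hW φ hR
    exact top_le_iff.1 ((hR ⊤ (T ⊤ a) hW.ge).trans (φ.2.monotone (hA.toLVL.ax_T1_le a)))

end Modal

theorem bOpen_mem_beta1 {L : Type*} [HeytingAlgebra L] [DecidableEq L] {A : Type*}
    [HeytingAlgebra A] (T : L → A → A) (b : A) : bOpen T b ∈ beta1 (tauH1 T) (tauH2 T) :=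
  ⟨isOpen_generateFrom_of_mem ⟨b, rfl⟩,
    (@isOpen_compl_iff _ _ (tauH2 T)).1 (isOpen_generateFrom_of_mem ⟨b, rfl⟩)⟩

/-- For an `L`-`ML`-algebra `A` and `a ∈ A`:
`⟨R_□⟩⟨T₁(a) → 0⟩ = ⟨□T₁(a) → 0⟩`, and consequently `[R_□]⟨a⟩ ∈ β₁`. -/
theorem statement12 {L : Type*} [HeytingAlgebra L] [Fintype L] [DecidableEq L]
    {A : Type*} [HeytingAlgebra A] (T : L → A → A) (Box : A → A)
    (hA : IsLML T Box) (a : A) :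
    ({W : HomL T | ∃ φ : HomL T, Rbox Box W.1 φ.1 ∧ φ.1 (T ⊤ a ⇨ ⊥) = ⊤}
        = {W : HomL T | W.1 (Box (T ⊤ a) ⇨ ⊥) = ⊤}) ∧
    (IsOpen[tauH1 T] {W : HomL T | ∀ φ : HomL T, Rbox Box W.1 φ.1 → φ.1 a = ⊤} ∧
     IsClosed[tauH2 T] {W : HomL T | ∀ φ : HomL T, Rbox Box W.1 φ.1 → φ.1 a = ⊤}) := by
  refine ⟨hA.rbox_diamond_eq a, ?_⟩
  rw [hA.rbox_box_eq_bOpen a]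
  exact bOpen_mem_beta1 T _
end

section
/- Let (P,τ₁,τ₂) be a pairwise Boolean space, L a finite lattice with the discrete topology on both components, and R a binary relation on P such that R[p] = {q : p R q} is pairwise compact for every p ∈ P and such that [R]C ∈ β₁ and ⟨R⟩C ∈ β₁ for every C ∈ β₁. Then for every pairwise continuous map η : P → L, the map □_R η : P → L defined by (□_R η)(p) = ⋀{η(q) : q ∈ R[p]} is pairwise continuous. -/
open Topology TopologicalSpace Set

/-- If each `R[p]` is pairwise compact and `[R]C, ⟨R⟩C ∈ β₁` for all `C ∈ β₁`, then for
every pairwise continuous `η : P → L` the map `□_R η : p ↦ ⋀{η(q) : q ∈ R[p]}` is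
pairwise continuous (with `L` finite, carrying the discrete topology twice). -/
theorem statement17 {P : Type*} {L : Type*} [Fintype L] [Lattice L] [BoundedOrder L]
    (t1 t2 : TopologicalSpace P) (hB : PairwiseBoolean t1 t2)
    (R : P → P → Prop) (hR : ∀ p : P, @IsCompact P (t1 ⊔ t2) {q : P | R p q})
    (hbox : ∀ C ∈ beta1 t1 t2, {p : P | {q : P | R p q} ⊆ C} ∈ beta1 t1 t2)
    (hdia : ∀ C ∈ beta1 t1 t2, {p : P | ({q : P | R p q} ∩ C).Nonempty} ∈ beta1 t1 t2)
    (η : P → L) (hη : PairwiseContinuous t1 t2 (⊥ : TopologicalSpace L) ⊥ η) :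
    PairwiseContinuous t1 t2 (⊥ : TopologicalSpace L) ⊥
      (fun p : P => infSet {x : L | ∃ q : P, R p q ∧ η q = x}) := by
  obtain ⟨hη1, hη2⟩ := hη
  classical
  have hopenL : ∀ s : Set L, IsOpen[(⊥ : TopologicalSpace L)] s := by
    intro s
    letI : TopologicalSpace L := ⊥
    haveI : DiscreteTopology L := ⟨rfl⟩
    exact isOpen_discrete s
  -- fibers of η are in β₁, as are their complements
  have hp1 : ∀ s : Set L, IsOpen[t1] (η ⁻¹' s) := fun s =>
    @Continuous.isOpen_preimage P L t1 ⊥ η hη1 s (hopenL s)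
  have hp2 : ∀ s : Set L, IsOpen[t2] (η ⁻¹' s) := fun s =>
    @Continuous.isOpen_preimage P L t2 ⊥ η hη2 s (hopenL s)
  have hfib : ∀ x : L, η ⁻¹' {x} ∈ beta1 t1 t2 := by
    intro x
    refine ⟨hp1 _, ⟨?_⟩⟩
    have h2 := hp2 {x}ᶜ
    rwa [Set.preimage_compl] at h2
  have hfibc : ∀ x : L, (η ⁻¹' {x})ᶜ ∈ beta1 t1 t2 := by
    intro x
    refine ⟨?_, ⟨?_⟩⟩
    · have h2 := hp1 {x}ᶜ
      rwa [Set.preimage_compl] at h2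
    · rw [compl_compl]; exact hp2 {x}
  set Sp : P → Set L := fun p => {x : L | ∃ q : P, R p q ∧ η q = x} with hSp
  set A : Set L → Set P := fun s => {p : P | Sp p = s} with hA
  have hAeq : ∀ s : Set L, A s = ⋂ x : L,
      (if x ∈ s then {p : P | ({q : P | R p q} ∩ η ⁻¹' {x}).Nonempty}
        else {p : P | {q : P | R p q} ⊆ (η ⁻¹' {x})ᶜ}) := by
    intro s
    ext p
    simp only [hA, Set.mem_setOf_eq, Set.mem_iInter]
    constructor
    · intro h x
      by_cases hx : x ∈ s
      · simp only [hx, if_true]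
        have : x ∈ Sp p := h ▸ hx
        obtain ⟨q, hq, hqx⟩ := this
        exact ⟨q, hq, hqx⟩
      · simp only [hx, if_false]
        intro q hq hqx
        exact hx (h ▸ ⟨q, hq, hqx⟩)
    · intro h
      ext x
      have hx := h x
      by_cases hxs : x ∈ s
      · simp only [hxs, if_true] at hx
        obtain ⟨q, hq, hqx⟩ := hx
        exact ⟨fun _ => hxs, fun _ => ⟨q, hq, hqx⟩⟩
      · simp only [hxs, if_false] at hx
        refine ⟨fun hxS => ?_, fun h' => absurd h' hxs⟩
        obtain ⟨q, hq, hqx⟩ := hxS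
        exact (hx hq hqx).elim
  have hAbeta : ∀ s : Set L, A s ∈ beta1 t1 t2 := by
    intro s
    rw [hAeq s]
    have hcomp : ∀ x : L,
        (if x ∈ s then {p : P | ({q : P | R p q} ∩ η ⁻¹' {x}).Nonempty}
          else {p : P | {q : P | R p q} ⊆ (η ⁻¹' {x})ᶜ}) ∈ beta1 t1 t2 := by
      intro x
      by_cases hx : x ∈ s
      · simpa [hx] using hdia _ (hfib x)
      · simpa [hx] using hbox _ (hfibc x)
    exact ⟨@isOpen_iInter_of_finite P L t1 _ _ (fun x => (hcomp x).1),
      @isClosed_iInter P L t2 _ (fun x => (hcomp x).2)⟩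
  have hpre : ∀ W : Set L,
      (fun p : P => infSet (Sp p)) ⁻¹' W =
        ⋃ s : {s : Set L // infSet s ∈ W}, A s.1 := by
    intro W
    ext p
    simp only [Set.mem_preimage, Set.mem_iUnion, hA, Set.mem_setOf_eq]
    exact ⟨fun h => ⟨⟨Sp p, h⟩, rfl⟩, fun ⟨s, hs⟩ => hs ▸ s.2⟩
  constructor
  · rw [continuous_def]
    intro W _
    rw [show (fun p : P => infSet {x : L | ∃ q : P, R p q ∧ η q = x}) = fun p => infSet (Sp p) from rfl,
      hpre W]
    exact @isOpen_iUnion P _ t1 _ (fun s => (hAbeta s.1).1)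
  · rw [continuous_def]
    intro W _
    have hcl : IsClosed[t2] ((fun p : P => infSet (Sp p)) ⁻¹' Wᶜ) := by
      rw [hpre Wᶜ]
      have : Finite {s : Set L // infSet s ∈ Wᶜ} := by infer_instance
      exact @isClosed_iUnion_of_finite P _ t2 _ _ (fun s => (hAbeta s.1).2)
    have : (fun p : P => infSet (Sp p)) ⁻¹' W = ((fun p : P => infSet (Sp p)) ⁻¹' Wᶜ)ᶜ := by
      rw [Set.preimage_compl, compl_compl]
    rw [show (fun p : P => infSet {x : L | ∃ q : P, R p q ∧ η q = x}) = fun p => infSet (Sp p) from rfl,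
      this]
    exact hcl.isOpen_compl
end

section
/- Let (C,τ₁,τ₂) be a pairwise Boolean space and ξ : C → V_P(C) a pairwise continuous map. Define a binary relation R_ξ on C by c R_ξ d iff d ∈ ξ(c). Then R_ξ[c] = ξ(c) is pairwise compact for every c ∈ C, and for every D ∈ β₁ one has [R_ξ]D = ξ⁻¹(□D) ∈ β₁ and ⟨R_ξ⟩D = ξ⁻¹(◇D) ∈ β₁. -/
open Topology TopologicalSpace Set

/-- For a pairwise continuous coalgebra map `ξ : C → V_P(C)` on a pairwise Boolean space,
with `c R_ξ d ↔ d ∈ ξ(c)`: each `R_ξ[c] = ξ(c)` is pairwise compact, and for every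
`D ∈ β₁`, `[R_ξ]D = ξ⁻¹(□D) ∈ β₁` and `⟨R_ξ⟩D = ξ⁻¹(◇D) ∈ β₁`. -/
theorem statement19 {C : Type*} (t1 t2 : TopologicalSpace C)
    (hB : PairwiseBoolean t1 t2)
    (ξ : C → KSet t1 t2)
    (hξ : PairwiseContinuous t1 t2 (tau1V t1 t2) (tau2V t1 t2) ξ) :
    (∀ c : C, @IsCompact C (t1 ⊔ t2) (ξ c).1) ∧
    ∀ D ∈ beta1 t1 t2,
      ({c : C | (ξ c).1 ⊆ D} = ξ ⁻¹' (vbox t1 t2 D) ∧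
        {c : C | (ξ c).1 ⊆ D} ∈ beta1 t1 t2) ∧
      ({c : C | ((ξ c).1 ∩ D).Nonempty} = ξ ⁻¹' (vdia t1 t2 D) ∧
        {c : C | ((ξ c).1 ∩ D).Nonempty} ∈ beta1 t1 t2) := by
  obtain ⟨hH, hZ, hC⟩ := hB
  constructor
  · intro c
    letI := t1 ⊔ t2
    haveI : CompactSpace C := hC
    exact (ξ c).2.isCompact
  · intro D hD
    -- Dᶜ ∈ β₂
    have hDc : Dᶜ ∈ beta1 t2 t1 := ⟨(@isOpen_compl_iff C D t2).mpr hD.2, (@isClosed_compl_iff C t1 D).mpr hD.1⟩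
    have hbox1 : IsOpen[tau1V t1 t2] (vbox t1 t2 D) :=
      TopologicalSpace.isOpen_generateFrom_of_mem (Or.inl ⟨D, hD, rfl⟩)
    have hdia1 : IsOpen[tau1V t1 t2] (vdia t1 t2 D) :=
      TopologicalSpace.isOpen_generateFrom_of_mem (Or.inr ⟨D, hD, rfl⟩)
    have hdia2 : IsOpen[tau2V t1 t2] (vdia t1 t2 Dᶜ) :=
      TopologicalSpace.isOpen_generateFrom_of_mem (Or.inr ⟨Dᶜ, hDc, rfl⟩)
    have hbox2 : IsOpen[tau2V t1 t2] (vbox t1 t2 Dᶜ) :=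
      TopologicalSpace.isOpen_generateFrom_of_mem (Or.inl ⟨Dᶜ, hDc, rfl⟩)
    have e1 : {c : C | (ξ c).1 ⊆ D} = ξ ⁻¹' (vbox t1 t2 D) := rfl
    have e2 : {c : C | ((ξ c).1 ∩ D).Nonempty} = ξ ⁻¹' (vdia t1 t2 D) := rfl
    have ec1 : {c : C | (ξ c).1 ⊆ D}ᶜ = ξ ⁻¹' (vdia t1 t2 Dᶜ) := by
      ext c
      simp only [Set.mem_compl_iff, Set.mem_setOf_eq, Set.mem_preimage, vdia,
        Set.mem_setOf_eq, Set.not_subset]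
      constructor
      · rintro ⟨x, hx, hxD⟩; exact ⟨x, hx, hxD⟩
      · rintro ⟨x, hx, hxD⟩; exact ⟨x, hx, hxD⟩
    have ec2 : {c : C | ((ξ c).1 ∩ D).Nonempty}ᶜ = ξ ⁻¹' (vbox t1 t2 Dᶜ) := by
      ext c
      simp only [Set.mem_compl_iff, Set.mem_setOf_eq, Set.mem_preimage, vbox,
        Set.mem_setOf_eq, Set.not_nonempty_iff_eq_empty]
      rw [← Set.disjoint_iff_inter_eq_empty, Set.disjoint_right]
      exact ⟨fun h x hx hxD => h hxD hx, fun h x hxD hx => h hx hxD⟩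
    refine ⟨⟨e1, ?_, ?_⟩, ⟨e2, ?_, ?_⟩⟩
    · rw [e1]; exact continuous_def.mp hξ.1 _ hbox1
    · rw [← @isOpen_compl_iff C _ t2, ec1]
      exact continuous_def.mp hξ.2 _ hdia2
    · rw [e2]; exact continuous_def.mp hξ.1 _ hdia1
    · rw [← @isOpen_compl_iff C _ t2, ec2]
      exact continuous_def.mp hξ.2 _ hbox2
end
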